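/- arXiv:1708.09041 — 2 statements merged into one kernel-verified Lean document; each statement's English description precedes it below -/
import Mathlib

section
/- Let ψ be an Orlicz function with convex conjugate ψ*. Let T ∈ {1,…,n} and Z = (Z₁,…,Zₙ) be jointly distributed with E[Zᵢ] = 0 and Luxemburg norm ‖Zᵢ‖_ψ ≤ σ for all i. Then |E[Z_T]| ≤ σ · Σᵢ inf_{aᵢ∈ℝ} ‖P_{T|Z}(i|Z) − aᵢ‖_{ψ*}^A, where ‖X‖_{ψ*}^A = inf_{t>0}(1 + E[ψ*(t|X|)])/t is the Amemiya norm. -/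
/-!
Splitting on the value of `T`, `E[Z_T] = Σᵢ E[Zᵢ 1{T = i}]`. Since `Zᵢ` is `σ(Z)`-measurable
and centred, `E[Zᵢ 1{T = i}] = E[Zᵢ (P_{T|Z}(i|Z) - aᵢ)]` for every constant `aᵢ`, and each
term is bounded by the Orlicz–Hölder inequality `E|XY| ≤ ‖X‖_ψ ‖Y‖_{ψ*}^A`, which follows from
Young's inequality `uv ≤ ψ(u) + ψ*(v)` applied to `|X|/s` and `t|Y|`.
-/

open MeasureTheory Set ENNReal

/-- `ψ` is an Orlicz function. -/
def IsOrlicz (ψ : ℝ → ℝ≥0∞) : Prop :=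
  ψ 0 = 0 ∧
  (∀ u ∈ Set.Ici (0:ℝ), ∀ v ∈ Set.Ici (0:ℝ), ∀ c d : ℝ, 0 ≤ c → 0 ≤ d → c + d = 1 →
    ψ (c * u + d * v) ≤ ENNReal.ofReal c * ψ u + ENNReal.ofReal d * ψ v) ∧
  (∃ x : ℝ, 0 < x ∧ ψ x ≠ 0) ∧ (∃ x : ℝ, 0 < x ∧ ψ x ≠ ∞)

/-- The convex conjugate `ψ*(u) = sup_{v ≥ 0} (uv - ψ(v))`. -/
noncomputable def orliczConj (ψ : ℝ → ℝ≥0∞) (u : ℝ) : ℝ≥0∞ :=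
  ⨆ (v : ℝ) (_ : 0 ≤ v), (ENNReal.ofReal (u * v) - ψ v)

/-- The Luxemburg `ψ`-norm. -/
noncomputable def luxNorm {Ω : Type*} [MeasurableSpace Ω] (μ : MeasureTheory.Measure Ω)
    (ψ : ℝ → ℝ≥0∞) (X : Ω → ℝ) : ℝ≥0∞ :=
  sInf {e : ℝ≥0∞ | ∃ s : ℝ, 0 < s ∧ e = ENNReal.ofReal s ∧ ∫⁻ ω, ψ (|X ω| / s) ∂μ ≤ 1}

/-- The Amemiya norm `‖X‖_{ψ*}^A = inf_{t>0} (1 + E[ψ*(t|X|)])/t`. -/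
noncomputable def amemiyaNorm {Ω : Type*} [MeasurableSpace Ω] (μ : MeasureTheory.Measure Ω)
    (ψs : ℝ → ℝ≥0∞) (X : Ω → ℝ) : ℝ≥0∞ :=
  ⨅ (t : ℝ) (_ : 0 < t), (1 + ∫⁻ ω, ψs (t * |X ω|) ∂μ) / ENNReal.ofReal t

lemma ofReal_mul_le_add_orliczConj (ψ : ℝ → ℝ≥0∞) {u : ℝ} (hu : 0 ≤ u) (v : ℝ) :
    ENNReal.ofReal (u * v) ≤ ψ u + orliczConj ψ v := by
  rw [mul_comm, ← tsub_le_iff_left]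
  exact le_iSup₂ (f := fun w (_ : 0 ≤ w) => ENNReal.ofReal (v * w) - ψ w) u hu

lemma orliczConj_monotone (ψ : ℝ → ℝ≥0∞) : Monotone (orliczConj ψ) := fun _ _ huu' =>
  iSup₂_mono fun _ hv =>
    tsub_le_tsub_right (ENNReal.ofReal_le_ofReal (mul_le_mul_of_nonneg_right huu' hv)) _

section Holder

variable {Ω : Type*} [MeasurableSpace Ω] {μ : Measure Ω} {ψ : ℝ → ℝ≥0∞} {f g : Ω → ℝ}

lemma lintegral_mul_le_ofReal_mul_amemiyaNorm (hg : AEMeasurable g μ) {s : ℝ} (hs : 0 < s)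
    (hf : ∫⁻ ω, ψ (|f ω| / s) ∂μ ≤ 1) :
    ∫⁻ ω, ENNReal.ofReal (|f ω| * |g ω|) ∂μ ≤
      ENNReal.ofReal s * amemiyaNorm μ (orliczConj ψ) g := by
  simp only [amemiyaNorm, ENNReal.mul_iInf_of_ne (ENNReal.ofReal_pos.2 hs).ne' ofReal_ne_top]
  refine le_iInf₂ fun t ht => ?_
  have hyoung : ∀ ω, ENNReal.ofReal (|f ω| * |g ω|) ≤
      ENNReal.ofReal (s / t) * (ψ (|f ω| / s) + orliczConj ψ (t * |g ω|)) := fun ω => by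
    have hsplit : |f ω| * |g ω| = s / t * (|f ω| / s * (t * |g ω|)) := by field_simp
    rw [hsplit, ENNReal.ofReal_mul (by positivity)]
    gcongr
    exact ofReal_mul_le_add_orliczConj ψ (by positivity) _
  have hconj : AEMeasurable (fun ω => orliczConj ψ (t * |g ω|)) μ :=
    (orliczConj_monotone ψ).measurable.comp_aemeasurable (hg.abs.const_mul t)
  calc ∫⁻ ω, ENNReal.ofReal (|f ω| * |g ω|) ∂μ
      ≤ ∫⁻ ω, ENNReal.ofReal (s / t) * (ψ (|f ω| / s) + orliczConj ψ (t * |g ω|)) ∂μ :=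
        lintegral_mono hyoung
    _ = ENNReal.ofReal (s / t) *
          (∫⁻ ω, ψ (|f ω| / s) ∂μ + ∫⁻ ω, orliczConj ψ (t * |g ω|) ∂μ) := by
        rw [lintegral_const_mul' _ _ ofReal_ne_top, lintegral_add_right' _ hconj]
    _ ≤ ENNReal.ofReal (s / t) * (1 + ∫⁻ ω, orliczConj ψ (t * |g ω|) ∂μ) := by gcongr
    _ = ENNReal.ofReal s * ((1 + ∫⁻ ω, orliczConj ψ (t * |g ω|) ∂μ) / ENNReal.ofReal t) := by
        rw [ENNReal.ofReal_div_of_pos ht, div_eq_mul_inv, div_eq_mul_inv]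
        ring

lemma ofReal_abs_integral_mul_le_of_luxNorm_le (hg : AEMeasurable g μ) {σ : ℝ} (hσ : 0 < σ)
    (hf : luxNorm μ ψ f ≤ ENNReal.ofReal σ) :
    ENNReal.ofReal |∫ ω, f ω * g ω ∂μ| ≤ ENNReal.ofReal σ * amemiyaNorm μ (orliczConj ψ) g := by
  set S := {e : ℝ≥0∞ | ∃ s : ℝ, 0 < s ∧ e = ENNReal.ofReal s ∧ ∫⁻ ω, ψ (|f ω| / s) ∂μ ≤ 1}
  set A := amemiyaNorm μ (orliczConj ψ) g
  rcases eq_or_ne A ∞ with hA | hA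
  · simp [hA, ENNReal.mul_top, hσ]
  obtain ⟨e, he, -⟩ := sInf_lt_iff.1 (hf.trans_lt ofReal_lt_top)
  calc ENNReal.ofReal |∫ ω, f ω * g ω ∂μ|
      ≤ ∫⁻ ω, ENNReal.ofReal (|f ω| * |g ω|) ∂μ := by
        rw [← Real.enorm_eq_ofReal_abs]
        refine (enorm_integral_le_lintegral_enorm _).trans_eq (lintegral_congr fun ω => ?_)
        rw [Real.enorm_eq_ofReal_abs, abs_mul]
    _ ≤ ⨅ e : S, (e : ℝ≥0∞) * A := le_iInf fun ⟨_, s, hs, hes, hfs⟩ =>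
        hes ▸ lintegral_mul_le_ofReal_mul_amemiyaNorm hg hs hfs
    _ = sInf S * A := by
        rw [sInf_eq_iInf', ENNReal.iInf_mul' (by simp [hA]) fun _ => ⟨⟨e, he⟩⟩]
    _ ≤ ENNReal.ofReal σ * A := by gcongr; exact hf

end Holder

lemma integral_mul_eq_integral_mul_condExp_sub {Ω : Type*} {m m0 : MeasurableSpace Ω}
    {μ : Measure[m0] Ω} [IsFiniteMeasure μ] (hm : m ≤ m0) {f g : Ω → ℝ}
    (hfm : StronglyMeasurable[m] f) (hf : Integrable f μ) (hf0 : ∫ ω, f ω ∂μ = 0)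
    (hg : AEStronglyMeasurable g μ) {R : ℝ} (hgR : ∀ᵐ ω ∂μ, |g ω| ≤ R) (a : ℝ) :
    ∫ ω, f ω * g ω ∂μ = ∫ ω, f ω * ((μ[g|m]) ω - a) ∂μ := by
  have hg_int : Integrable g μ := Integrable.of_bound hg R hgR
  have hfg : Integrable (f * g) μ := hf.mul_bdd hg hgR
  have hfc : Integrable (fun ω => f ω * (μ[g|m]) ω) μ :=
    hf.mul_bdd integrable_condExp.aestronglyMeasurable (ae_bdd_abs_condExp_of_ae_bdd_abs hgR)
  calc ∫ ω, f ω * g ω ∂μ = ∫ ω, (μ[f * g|m]) ω ∂μ := (integral_condExp hm).symm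
    _ = ∫ ω, f ω * (μ[g|m]) ω ∂μ :=
        integral_congr_ae (condExp_mul_of_stronglyMeasurable_left hfm hfg hg_int)
    _ = ∫ ω, f ω * ((μ[g|m]) ω - a) ∂μ := by
        simp only [mul_sub]
        rw [integral_sub hfc (hf.mul_const a), integral_mul_const, hf0, zero_mul, sub_zero]

lemma ofReal_abs_integral_mul_le_iInf_amemiyaNorm_condExp {Ω : Type*} {m m0 : MeasurableSpace Ω}
    {μ : Measure[m0] Ω} [IsFiniteMeasure μ] (hm : m ≤ m0) {ψ : ℝ → ℝ≥0∞} {f g : Ω → ℝ}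
    (hfm : StronglyMeasurable[m] f) (hf : Integrable f μ) (hf0 : ∫ ω, f ω ∂μ = 0)
    {σ : ℝ} (hσ : 0 < σ) (hfσ : luxNorm μ ψ f ≤ ENNReal.ofReal σ)
    (hg : AEStronglyMeasurable g μ) {R : ℝ} (hgR : ∀ᵐ ω ∂μ, |g ω| ≤ R) :
    ENNReal.ofReal |∫ ω, f ω * g ω ∂μ| ≤
      ENNReal.ofReal σ * ⨅ a : ℝ, amemiyaNorm μ (orliczConj ψ) (fun ω => (μ[g|m]) ω - a) := by
  rw [ENNReal.mul_iInf_of_ne (by simp [hσ]) ofReal_ne_top]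
  refine le_iInf fun a => ?_
  rw [integral_mul_eq_integral_mul_condExp_sub hm hfm hf hf0 hg hgR a]
  exact ofReal_abs_integral_mul_le_of_luxNorm_le
    (integrable_condExp.aemeasurable.sub_const a) hσ hfσ

theorem stmt16_general {Ω : Type*} [MeasurableSpace Ω] (μ : Measure Ω) [IsProbabilityMeasure μ]
    (n : ℕ) (Z : Fin n → Ω → ℝ) (T : Ω → Fin n) (hT : Measurable T)
    (hZm : ∀ i, Measurable (Z i)) (hZint : ∀ i, Integrable (Z i) μ)
    (hmean : ∀ i, ∫ ω, Z i ω ∂μ = 0)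
    (ψ : ℝ → ℝ≥0∞)
    (σ : ℝ) (hσ : 0 < σ)
    (hlux : ∀ i, luxNorm μ ψ (Z i) ≤ ENNReal.ofReal σ) :
    ENNReal.ofReal |∫ ω, Z (T ω) ω ∂μ| ≤
      ENNReal.ofReal σ *
        ∑ i : Fin n, ⨅ a : ℝ,
          amemiyaNorm μ (orliczConj ψ)
            (fun ω =>
              (μ[(fun ω' => if T ω' = i then (1:ℝ) else 0) |
                MeasurableSpace.comap (fun ω' => fun j => Z j ω') MeasurableSpace.pi]) ω
              - a) := by
  have hm : MeasurableSpace.comap (fun ω' j => Z j ω') MeasurableSpace.pi ≤ ‹_› :=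
    (measurable_pi_lambda _ hZm).comap_le
  have hZ_meas : ∀ i, StronglyMeasurable[MeasurableSpace.comap (fun ω' j => Z j ω')
      MeasurableSpace.pi] (Z i) := fun i =>
    ((measurable_pi_apply i).comp (comap_measurable fun ω' j => Z j ω')).stronglyMeasurable
  have hind_meas : ∀ i, AEStronglyMeasurable (fun ω => if T ω = i then (1:ℝ) else 0) μ := fun i =>
    (Measurable.ite (hT (measurableSet_singleton i)) measurable_const
      measurable_const).aestronglyMeasurable
  have hind_bdd : ∀ i, ∀ᵐ ω ∂μ, |if T ω = i then (1:ℝ) else 0| ≤ 1 := fun i =>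
    ae_of_all μ fun ω => by split_ifs <;> simp
  have hsplit : ∫ ω, Z (T ω) ω ∂μ =
      ∑ i, ∫ ω, Z i ω * (if T ω = i then (1:ℝ) else 0) ∂μ := by
    rw [← integral_finsetSum _ fun i _ => (hZint i).mul_bdd (hind_meas i) (hind_bdd i)]
    simp
  calc ENNReal.ofReal |∫ ω, Z (T ω) ω ∂μ|
      ≤ ∑ i, ENNReal.ofReal |∫ ω, Z i ω * (if T ω = i then (1:ℝ) else 0) ∂μ| := by
        simpa only [hsplit, ← Real.enorm_eq_ofReal_abs] using enorm_sum_le _ _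
    _ ≤ _ := by
        rw [Finset.mul_sum]
        exact Finset.sum_le_sum fun i _ => ofReal_abs_integral_mul_le_iInf_amemiyaNorm_condExp
          hm (hZ_meas i) (hZint i) (hmean i) hσ (hlux i) (hind_meas i) (hind_bdd i)

/-- Main theorem (Orlicz form): if `‖Zᵢ‖_ψ ≤ σ` and `E[Zᵢ] = 0` for all `i`, then for
any selection rule `T`,
`|E[Z_T]| ≤ σ Σᵢ inf_{aᵢ} ‖P_{T|Z}(i|Z) - aᵢ‖_{ψ*}^A`,
where `P_{T|Z}(i|Z)` is the conditional probability `P(T = i | Z)`. -/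
theorem stmt16 {Ω : Type*} [MeasurableSpace Ω] (μ : Measure Ω) [IsProbabilityMeasure μ]
    (n : ℕ) (Z : Fin n → Ω → ℝ) (T : Ω → Fin n) (hT : Measurable T)
    (hZm : ∀ i, Measurable (Z i)) (hZint : ∀ i, Integrable (Z i) μ)
    (hmean : ∀ i, ∫ ω, Z i ω ∂μ = 0)
    (ψ : ℝ → ℝ≥0∞) (hψ : IsOrlicz ψ) (hψm : Measurable ψ)
    (σ : ℝ) (hσ : 0 < σ)
    (hlux : ∀ i, luxNorm μ ψ (Z i) ≤ ENNReal.ofReal σ) :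
    ENNReal.ofReal |∫ ω, Z (T ω) ω ∂μ| ≤
      ENNReal.ofReal σ *
        ∑ i : Fin n, ⨅ a : ℝ,
          amemiyaNorm μ (orliczConj ψ)
            (fun ω =>
              (μ[(fun ω' => if T ω' = i then (1:ℝ) else 0) |
                MeasurableSpace.comap (fun ω' => fun j => Z j ω') MeasurableSpace.pi]) ω
              - a) :=
  stmt16_general μ n Z T hT hZm hZint hmean ψ σ hσ hlux
end

section
/- Let T ∈ {1,…,n} and Z = (Z₁,…,Zₙ) be jointly distributed with E[Zᵢ] = 0, ‖Zᵢ‖_p ≤ σ for all i, p > 1, and 1/p + 1/q = 1. Then E[Z_T] ≤ σ · n^{1/p} · inf_{a₁,…,aₙ∈ℝ} (Σᵢ P_T(i)|1 − aᵢ|^q + (1 − P_T(i))|aᵢ|^q)^{1/q}. -/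
open MeasureTheory Set ENNReal

/-!
Since `T` takes exactly one value, `Z_T = ∑ᵢ Zᵢ 1{T = i}`, and since `E[Zᵢ] = 0` one may
subtract any constant `aᵢ` from the indicator: `E[Z_T] = ∑ᵢ E[Zᵢ (1{T = i} - aᵢ)]`.
Hölder's inequality bounds each term by `σ ‖1{T = i} - aᵢ‖_q`, whose `q`-th power is
`P_T(i)|1 - aᵢ|^q + (1 - P_T(i))|aᵢ|^q`, and the discrete Hölder inequality against the
constant sequence `1` turns the sum of `q`-th roots into `n^{1/p}` times the `q`-th root of the sum.
-/

namespace MeasureTheory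

variable {Ω : Type*} [MeasurableSpace Ω] {μ : Measure Ω}

theorem integral_apply_index_eq_sum_setIntegral {ι E : Type*} [Fintype ι] [MeasurableSpace ι]
    [MeasurableSingletonClass ι] [NormedAddCommGroup E] [NormedSpace ℝ E]
    {Z : ι → Ω → E} {T : Ω → ι} (hT : Measurable T) (hZ : ∀ i, Integrable (Z i) μ) :
    ∫ ω, Z (T ω) ω ∂μ = ∑ i, ∫ ω in T ⁻¹' {i}, Z i ω ∂μ := by
  have hsum : (fun ω => Z (T ω) ω) = fun ω => ∑ i, (T ⁻¹' {i}).indicator (Z i) ω := by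
    classical
    ext ω
    simp [Set.indicator_apply, eq_comm]
  rw [hsum, integral_finsetSum _ fun i _ => (hZ i).indicator (hT (measurableSet_singleton i))]
  exact Finset.sum_congr rfl fun i _ => integral_indicator (hT (measurableSet_singleton i))

theorem setIntegral_eq_integral_mul_indicator_sub {Z : Ω → ℝ} (hZ : Integrable Z μ)
    (hmean : ∫ ω, Z ω ∂μ = 0) {A : Set Ω} (hA : MeasurableSet A) (a : ℝ) :
    ∫ ω in A, Z ω ∂μ = ∫ ω, Z ω * (A.indicator 1 ω - a) ∂μ := by
  have hsplit : (fun ω => Z ω * (A.indicator 1 ω - a)) = fun ω => A.indicator Z ω - a * Z ω := by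
    ext ω
    by_cases h : ω ∈ A <;> simp [h] <;> ring
  rw [hsplit, integral_sub (hZ.indicator hA) (hZ.const_mul a), integral_const_mul, hmean,
    integral_indicator hA, mul_zero, sub_zero]

theorem integral_comp_indicator_one [IsProbabilityMeasure μ] {A : Set Ω} (hA : MeasurableSet A)
    (φ : ℝ → ℝ) :
    ∫ ω, φ (A.indicator 1 ω) ∂μ = μ.real A * φ 1 + (1 - μ.real A) * φ 0 := by
  have hsplit : (fun ω => φ (A.indicator 1 ω)) =
      fun ω => A.indicator (fun _ => φ 1) ω + Aᶜ.indicator (fun _ => φ 0) ω := by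
    ext ω
    by_cases h : ω ∈ A <;> simp [h]
  rw [hsplit, integral_add ((integrable_const _).indicator hA)
      ((integrable_const _).indicator hA.compl), integral_indicator_const _ hA,
    integral_indicator_const _ hA.compl, probReal_compl_eq_one_sub hA, smul_eq_mul, smul_eq_mul]

theorem setIntegral_le_eLpNorm_mul_of_integral_eq_zero [IsProbabilityMeasure μ] {p q : ℝ}
    (hpq : p.HolderConjugate q) {Z : Ω → ℝ} (hZ : MemLp Z (ENNReal.ofReal p) μ)
    (hmean : ∫ ω, Z ω ∂μ = 0) {A : Set Ω} (hA : MeasurableSet A) (a : ℝ) :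
    ∫ ω in A, Z ω ∂μ ≤ (eLpNorm Z (ENNReal.ofReal p) μ).toReal *
      (μ.real A * |1 - a| ^ q + (1 - μ.real A) * |a| ^ q) ^ (1 / q) := by
  set g : Ω → ℝ := fun ω => A.indicator 1 ω - a
  have hg : MemLp g (ENNReal.ofReal q) μ :=
    (memLp_indicator_const _ hA 1 (Or.inr (measure_ne_top μ A))).sub (memLp_const a)
  have hZp : (eLpNorm Z (ENNReal.ofReal p) μ).toReal = (∫ ω, ‖Z ω‖ ^ p ∂μ) ^ (1 / p) := by
    rw [hZ.eLpNorm_eq_integral_rpow_norm (by simp [hpq.pos]) ofReal_ne_top,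
      toReal_ofReal hpq.nonneg, toReal_ofReal (by positivity), one_div]
  have hgq : ∫ ω, ‖g ω‖ ^ q ∂μ = μ.real A * |1 - a| ^ q + (1 - μ.real A) * |a| ^ q := by
    simpa [g, Real.norm_eq_abs, abs_neg] using
      integral_comp_indicator_one (μ := μ) hA fun x => ‖x - a‖ ^ q
  calc ∫ ω in A, Z ω ∂μ = ∫ ω, Z ω * g ω ∂μ :=
        setIntegral_eq_integral_mul_indicator_sub (hZ.integrable (one_le_ofReal.2 hpq.lt.le))
          hmean hA a
    _ ≤ ∫ ω, ‖Z ω‖ * ‖g ω‖ ∂μ := by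
        simpa only [Real.norm_eq_abs, abs_mul] using
          (le_abs_self _).trans (abs_integral_le_integral_abs (f := fun ω => Z ω * g ω))
    _ ≤ (∫ ω, ‖Z ω‖ ^ p ∂μ) ^ (1 / p) * (∫ ω, ‖g ω‖ ^ q ∂μ) ^ (1 / q) :=
        integral_mul_norm_le_Lp_mul_Lq hpq hZ hg
    _ = _ := by rw [hZp, hgq]

end MeasureTheory

theorem Real.sum_rpow_one_div_le_card_rpow_mul {ι : Type*} (s : Finset ι) {t : ι → ℝ}
    (ht : ∀ i ∈ s, 0 ≤ t i) {p q : ℝ} (hpq : p.HolderConjugate q) :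
    ∑ i ∈ s, t i ^ (1 / q) ≤ (s.card : ℝ) ^ (1 / p) * (∑ i ∈ s, t i) ^ (1 / q) := by
  have h := Real.inner_le_Lp_mul_Lq_of_nonneg s (f := fun _ => 1) (g := fun i => t i ^ (1 / q))
    hpq (fun _ _ => zero_le_one) (fun i hi => Real.rpow_nonneg (ht i hi) _)
  simp only [one_mul, Real.one_rpow, Finset.sum_const, nsmul_eq_mul, mul_one] at h
  have hpow : ∑ i ∈ s, (t i ^ (1 / q)) ^ q = ∑ i ∈ s, t i := Finset.sum_congr rfl fun i hi => by
    rw [one_div, Real.rpow_inv_rpow (ht i hi) hpq.symm.ne_zero]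
  rwa [hpow] at h

theorem stmt19_general {Ω : Type*} [MeasurableSpace Ω] (μ : Measure Ω) [IsProbabilityMeasure μ]
    (n : ℕ) (Z : Fin n → Ω → ℝ) (T : Ω → Fin n) (hT : Measurable T)
    (hZint : ∀ i, Integrable (Z i) μ)
    (hmean : ∀ i, ∫ ω, Z i ω ∂μ = 0)
    (p q : ℝ) (hp : 1 < p) (hpq : 1 / p + 1 / q = 1)
    (σ : ℝ) (hσ : 0 < σ)
    (hnorm : ∀ i, eLpNorm (Z i) (ENNReal.ofReal p) μ ≤ ENNReal.ofReal σ) :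
    ∫ ω, Z (T ω) ω ∂μ ≤
      σ * (n : ℝ) ^ (1 / p) *
        ⨅ a : Fin n → ℝ,
          (∑ i : Fin n,
            ((μ {ω | T ω = i}).toReal * |1 - a i| ^ q +
              (1 - (μ {ω | T ω = i}).toReal) * |a i| ^ q)) ^ (1 / q) := by
  have hpq' : p.HolderConjugate q := Real.holderConjugate_iff.mpr ⟨hp, by simpa [one_div] using hpq⟩
  rw [Real.mul_iInf_of_nonneg (by positivity)]
  refine le_ciInf fun a => ?_
  set t : Fin n → ℝ := fun i =>
    μ.real (T ⁻¹' {i}) * |1 - a i| ^ q + (1 - μ.real (T ⁻¹' {i})) * |a i| ^ q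
  have ht : ∀ i ∈ Finset.univ, 0 ≤ t i := fun i _ => by
    have : μ.real (T ⁻¹' {i}) ≤ 1 := measureReal_le_one
    have : 0 ≤ 1 - μ.real (T ⁻¹' {i}) := by linarith
    positivity
  have hZ : ∀ i, MemLp (Z i) (ENNReal.ofReal p) μ := fun i =>
    ⟨(hZint i).aestronglyMeasurable, (hnorm i).trans_lt ofReal_lt_top⟩
  calc ∫ ω, Z (T ω) ω ∂μ = ∑ i, ∫ ω in T ⁻¹' {i}, Z i ω ∂μ :=
        integral_apply_index_eq_sum_setIntegral hT hZint
    _ ≤ ∑ i, σ * t i ^ (1 / q) := Finset.sum_le_sum fun i hi =>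
        (setIntegral_le_eLpNorm_mul_of_integral_eq_zero hpq' (hZ i) (hmean i)
          (hT (measurableSet_singleton i)) (a i)).trans <| mul_le_mul_of_nonneg_right
            (toReal_le_of_le_ofReal hσ.le (hnorm i)) (Real.rpow_nonneg (ht i hi) _)
    _ = σ * ∑ i, t i ^ (1 / q) := (Finset.mul_sum _ _ _).symm
    _ ≤ σ * ((n : ℝ) ^ (1 / p) * (∑ i, t i) ^ (1 / q)) := by
        gcongr
        simpa using Real.sum_rpow_one_div_le_card_rpow_mul Finset.univ ht hpq'
    _ = _ := by rw [mul_assoc]; rfl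

/-- Intermediate marginal bound: if `E[Zᵢ] = 0`, `‖Zᵢ‖_p ≤ σ`, `p > 1`,
`1/p + 1/q = 1`, then
`E[Z_T] ≤ σ n^{1/p} inf_{a₁,…,aₙ} (Σᵢ P_T(i)|1-aᵢ|^q + (1-P_T(i))|aᵢ|^q)^{1/q}`. -/
theorem stmt19 {Ω : Type*} [MeasurableSpace Ω] (μ : Measure Ω) [IsProbabilityMeasure μ]
    (n : ℕ) (Z : Fin n → Ω → ℝ) (T : Ω → Fin n) (hT : Measurable T)
    (hZm : ∀ i, Measurable (Z i)) (hZint : ∀ i, Integrable (Z i) μ)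
    (hmean : ∀ i, ∫ ω, Z i ω ∂μ = 0)
    (p q : ℝ) (hp : 1 < p) (hpq : 1 / p + 1 / q = 1)
    (σ : ℝ) (hσ : 0 < σ)
    (hnorm : ∀ i, eLpNorm (Z i) (ENNReal.ofReal p) μ ≤ ENNReal.ofReal σ) :
    ∫ ω, Z (T ω) ω ∂μ ≤
      σ * (n : ℝ) ^ (1 / p) *
        ⨅ a : Fin n → ℝ,
          (∑ i : Fin n,
            ((μ {ω | T ω = i}).toReal * |1 - a i| ^ q +
              (1 - (μ {ω | T ω = i}).toReal) * |a i| ^ q)) ^ (1 / q) :=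
  stmt19_general μ n Z T hT hZint hmean p q hp hpq σ hσ hnorm
end
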